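/- arXiv:2104.00415 — 2 statements merged into one kernel-verified Lean document; each statement's English description precedes it below -/
import Mathlib

section
/- The tail of the Taylor series of κ₁ satisfies: for every positive integer p, (1/π)·Σ_{n=p+1}^∞ ((2n)!/(2^{2n}(n!)²(2n+1)(2n+2))) ≤ (e/(√2·π²))·(1/(6·p^{3/2})). -/
open Real

/-- squared central binomial bound: cb(m)^2 * (3m+1) ≤ 16^m -/
lemma cb_sq_le (m : ℕ) :
    ((Nat.centralBinom m : ℝ)) ^ 2 * (3 * m + 1) ≤ 16 ^ m := by
  induction m with
  | zero => simp [Nat.centralBinom_zero]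
  | succ m ih =>
    have hrec := Nat.succ_mul_centralBinom_succ m
    have hrecR : ((m : ℝ) + 1) * (Nat.centralBinom (m + 1) : ℝ)
        = 2 * (2 * m + 1) * (Nat.centralBinom m : ℝ) := by
      exact_mod_cast hrec
    have hm1 : (0:ℝ) < ((m:ℝ)+1)^2 * (3*m+1) := by positivity
    have hE : ((m:ℝ)+1)^2 * (Nat.centralBinom (m+1) : ℝ)^2
        = 4 * (2*m+1)^2 * (Nat.centralBinom m : ℝ)^2 := by
      have := congrArg (fun x : ℝ => x ^ 2) hrecR
      simp only [mul_pow] at this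
      nlinarith [this]
    have hkey : (2*(m:ℝ)+1)^2 * (3*m+4) ≤ 4 * ((m:ℝ)+1)^2 * (3*m+1) := by nlinarith [sq_nonneg (m:ℝ)]
    have h16 : (0:ℝ) < 16 ^ m := by positivity
    have hcb : (0:ℝ) ≤ (Nat.centralBinom m : ℝ)^2 := by positivity
    rw [← mul_le_mul_iff_of_pos_right hm1]
    have : (Nat.centralBinom (m+1) : ℝ)^2 * (3*(m+1)+1) * (((m:ℝ)+1)^2 * (3*m+1))
        = ((Nat.centralBinom m : ℝ)^2 * (3*m+1)) * ((2*(m:ℝ)+1)^2 * (3*m+4)) * 4 := by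
      push_cast
      nlinarith [hE]
    push_cast
    push_cast at this
    rw [this]
    calc ((Nat.centralBinom m : ℝ)^2 * (3*m+1)) * ((2*(m:ℝ)+1)^2 * (3*m+4)) * 4
        ≤ (16^m) * (4 * ((m:ℝ)+1)^2 * (3*m+1)) * 4 := by
          apply mul_le_mul_of_nonneg_right _ (by norm_num)
          apply mul_le_mul ih hkey (by positivity) (by positivity)
      _ = 16 ^ (m+1) * (((m:ℝ)+1)^2 * (3*m+1)) := by ring

lemma cb_le (m : ℕ) :
    (Nat.centralBinom m : ℝ) * Real.sqrt (3 * m + 1) ≤ 4 ^ m := by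
  have h1 : (0:ℝ) ≤ (Nat.centralBinom m : ℝ) * Real.sqrt (3 * m + 1) := by positivity
  have h2 : ((Nat.centralBinom m : ℝ) * Real.sqrt (3 * m + 1)) ^ 2 ≤ ((4:ℝ) ^ m) ^ 2 := by
    have hs : (Real.sqrt (3 * (m:ℝ) + 1)) ^ 2 = 3 * m + 1 := Real.sq_sqrt (by positivity)
    calc ((Nat.centralBinom m : ℝ) * Real.sqrt (3 * m + 1)) ^ 2
        = (Nat.centralBinom m : ℝ) ^ 2 * (3 * m + 1) := by rw [mul_pow, hs]
      _ ≤ 16 ^ m := cb_sq_le m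
      _ = ((4:ℝ) ^ m) ^ 2 := by rw [← pow_mul, Nat.mul_comm, pow_mul]; norm_num
  calc (Nat.centralBinom m : ℝ) * Real.sqrt (3 * m + 1)
      = Real.sqrt (((Nat.centralBinom m : ℝ) * Real.sqrt (3 * m + 1)) ^ 2) := (Real.sqrt_sq h1).symm
    _ ≤ Real.sqrt (((4:ℝ) ^ m) ^ 2) := Real.sqrt_le_sqrt h2
    _ = 4 ^ m := Real.sqrt_sq (by positivity)

/-- telescoping comparison: g k - g (k+1) ≥ (3/2)/((k+1)^2 √(k+1)) where g k = 1/(k √k) -/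
lemma g_diff (k : ℕ) (hk : 1 ≤ k) :
    (3/2) / (((k:ℝ)+1)^2 * Real.sqrt ((k:ℝ)+1)) ≤
      1 / ((k:ℝ) * Real.sqrt k) - 1 / (((k:ℝ)+1) * Real.sqrt ((k:ℝ)+1)) := by
  have hk0 : (0:ℝ) < k := by exact_mod_cast hk
  set t := Real.sqrt (k:ℝ) with ht
  set s := Real.sqrt ((k:ℝ)+1) with hs
  have ht0 : 0 < t := Real.sqrt_pos.mpr hk0
  have hs0 : 0 < s := Real.sqrt_pos.mpr (by linarith)
  have ht2 : t ^ 2 = k := Real.sq_sqrt (le_of_lt hk0)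
  have hs2 : s ^ 2 = (k:ℝ) + 1 := Real.sq_sqrt (by linarith)
  -- key: (k+5/2) * (k*t) ≤ (k+1)^2 * s
  have hb : (0:ℝ) ≤ ((k:ℝ)+5/2) * ((k:ℝ)*t) := by positivity
  have hsq : (((k:ℝ)+5/2) * ((k:ℝ)*t)) ^ 2 ≤ (((k:ℝ)+1)^2 * s) ^ 2 := by
    have e1 : (((k:ℝ)+5/2) * ((k:ℝ)*t)) ^ 2 = ((k:ℝ)+5/2)^2 * (k:ℝ)^2 * t^2 := by ring
    have e2 : (((k:ℝ)+1)^2 * s) ^ 2 = (((k:ℝ)+1)^2)^2 * s^2 := by ring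
    rw [e1, e2, ht2, hs2]
    nlinarith [hk0, sq_nonneg ((k:ℝ))]
  have hkey : ((k:ℝ)+5/2) * ((k:ℝ)*t) ≤ ((k:ℝ)+1)^2 * s := by
    calc ((k:ℝ)+5/2) * ((k:ℝ)*t) = Real.sqrt ((((k:ℝ)+5/2) * ((k:ℝ)*t))^2) := (Real.sqrt_sq hb).symm
      _ ≤ Real.sqrt ((((k:ℝ)+1)^2 * s)^2) := Real.sqrt_le_sqrt hsq
      _ = ((k:ℝ)+1)^2 * s := Real.sqrt_sq (by positivity)
  have hdiv : ((k:ℝ)+5/2) / (((k:ℝ)+1)^2 * s) ≤ 1 / ((k:ℝ) * t) := by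
    rw [div_le_div_iff₀ (by positivity) (by positivity)]
    nlinarith [hkey]
  have hsplit : ((k:ℝ)+5/2) / (((k:ℝ)+1)^2 * s)
      = (3/2) / (((k:ℝ)+1)^2 * s) + 1 / (((k:ℝ)+1) * s) := by
    field_simp
    ring
  linarith [hdiv, hsplit.symm.le, hsplit.le]

lemma term_le (k : ℕ) (hk : 1 ≤ k) :
    ((Nat.factorial (2 * (k + 1)) : ℝ) /
        (2 ^ (2 * (k + 1)) * (Nat.factorial (k + 1) : ℝ) ^ 2 *
          (2 * (((k + 1) : ℕ) : ℝ) + 1) * (2 * (((k + 1) : ℕ) : ℝ) + 2))) ≤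
      (1 / (6 * Real.sqrt 3)) *
        (1 / ((k:ℝ) * Real.sqrt k) - 1 / (((k:ℝ)+1) * Real.sqrt ((k:ℝ)+1))) := by
  set m := k + 1 with hm
  have hM : ((m:ℕ):ℝ) = (k:ℝ) + 1 := by push_cast [hm]; ring
  set M : ℝ := (k:ℝ) + 1 with hMdef
  have hM1 : (1:ℝ) ≤ (k:ℝ) := by exact_mod_cast hk
  have hM2 : (2:ℝ) ≤ M := by simp [hMdef]; linarith
  have hM0 : (0:ℝ) < M := by linarith
  set sM := Real.sqrt M with hsM
  have hsM0 : 0 < sM := Real.sqrt_pos.mpr hM0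
  -- factorial identity
  have hfactN : Nat.centralBinom m * (Nat.factorial m * Nat.factorial m) = Nat.factorial (2 * m) := by
    have := Nat.choose_mul_factorial_mul_factorial (show m ≤ 2 * m by omega)
    rw [Nat.centralBinom]
    rw [show 2 * m - m = m by omega] at this
    rw [← this]; ring
  have hfact : ((Nat.factorial (2 * m) : ℝ)) = (Nat.centralBinom m : ℝ) * (Nat.factorial m : ℝ)^2 := by
    rw [← hfactN]; push_cast; ring
  have hF0 : (0:ℝ) < (Nat.factorial m : ℝ) := by exact_mod_cast Nat.factorial_pos m
  have h4 : (2:ℝ) ^ (2 * m) = 4 ^ m := by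
    rw [pow_mul]; norm_num
  -- rewrite the term
  have hTerm : ((Nat.factorial (2 * m) : ℝ) /
        (2 ^ (2 * m) * (Nat.factorial m : ℝ) ^ 2 * (2 * ((m:ℕ):ℝ) + 1) * (2 * ((m:ℕ):ℝ) + 2)))
      = (Nat.centralBinom m : ℝ) / ((4:ℝ) ^ m * (2 * M + 1) * (2 * M + 2)) := by
    rw [hfact, hM, h4]
    have h40 : (0:ℝ) < (4:ℝ)^m := by positivity
    field_simp
  rw [hTerm]
  -- bound sqrt(3M+1) from below
  have hsqrt3 : Real.sqrt 3 * sM ≤ Real.sqrt (3 * M + 1) := by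
    rw [hsM, ← Real.sqrt_mul (by norm_num : (0:ℝ) ≤ 3)]
    exact Real.sqrt_le_sqrt (by linarith)
  have hcb0 : (0:ℝ) ≤ (Nat.centralBinom m : ℝ) := by positivity
  have hcble : (Nat.centralBinom m : ℝ) * Real.sqrt (3 * M + 1) ≤ 4 ^ m := by
    have := cb_le m
    rw [hM] at this
    convert this using 3
  have hs30 : (0:ℝ) < Real.sqrt 3 := Real.sqrt_pos.mpr (by norm_num)
  -- main term inequality
  have hstep : (Nat.centralBinom m : ℝ) / ((4:ℝ) ^ m * (2 * M + 1) * (2 * M + 2))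
      ≤ 1 / (Real.sqrt 3 * sM * (4 * M^2)) := by
    rw [div_le_div_iff₀ (by positivity) (by positivity)]
    have h1 : (Nat.centralBinom m : ℝ) * (Real.sqrt 3 * sM) ≤ 4 ^ m := by
      calc (Nat.centralBinom m : ℝ) * (Real.sqrt 3 * sM)
          ≤ (Nat.centralBinom m : ℝ) * Real.sqrt (3 * M + 1) :=
            mul_le_mul_of_nonneg_left hsqrt3 hcb0
        _ ≤ 4 ^ m := hcble
    have h2 : (4:ℝ) * M^2 ≤ (2 * M + 1) * (2 * M + 2) := by nlinarith
    calc (Nat.centralBinom m : ℝ) * (Real.sqrt 3 * sM * (4 * M^2))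
        = ((Nat.centralBinom m : ℝ) * (Real.sqrt 3 * sM)) * (4 * M^2) := by ring
      _ ≤ (4:ℝ)^m * ((2 * M + 1) * (2 * M + 2)) := by
          apply mul_le_mul h1 h2 (by positivity) (by positivity)
      _ = 1 * ((4:ℝ) ^ m * (2 * M + 1) * (2 * M + 2)) := by ring
  refine hstep.trans ?_
  -- compare with the telescoping difference
  have hgd := g_diff k hk
  have heq : (1 / (6 * Real.sqrt 3)) * ((3/2) / (M^2 * sM))
      = 1 / (Real.sqrt 3 * sM * (4 * M^2)) := by
    rw [hsM]
    field_simp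
    ring
  rw [← heq]
  apply mul_le_mul_of_nonneg_left _ (by positivity)
  rw [hMdef] at *
  convert hgd using 2

/-- tail bound for the Taylor series of κ₁. -/
theorem kappa1_taylor_tail_bound (p : ℕ) (hp : 1 ≤ p) :
    (1 / Real.pi) * ∑' n : ℕ,
        ((Nat.factorial (2 * (p + 1 + n)) : ℝ) /
          (2 ^ (2 * (p + 1 + n)) * (Nat.factorial (p + 1 + n) : ℝ) ^ 2 *
            (2 * ((p + 1 + n : ℕ) : ℝ) + 1) * (2 * ((p + 1 + n : ℕ) : ℝ) + 2))) ≤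
      (Real.exp 1 / (Real.sqrt 2 * Real.pi ^ 2)) * (1 / (6 * (p : ℝ) ^ ((3 : ℝ) / 2))) := by
  have hp0 : (0:ℝ) < p := by exact_mod_cast hp
  set g : ℕ → ℝ := fun j => 1 / ((j:ℝ) * Real.sqrt j) with hg
  set C : ℝ := 1 / (6 * Real.sqrt 3) with hC
  have hs30 : (0:ℝ) < Real.sqrt 3 := Real.sqrt_pos.mpr (by norm_num)
  have hC0 : 0 ≤ C := by positivity
  set f : ℕ → ℝ := fun n =>
      ((Nat.factorial (2 * (p + 1 + n)) : ℝ) /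
        (2 ^ (2 * (p + 1 + n)) * (Nat.factorial (p + 1 + n) : ℝ) ^ 2 *
          (2 * ((p + 1 + n : ℕ) : ℝ) + 1) * (2 * ((p + 1 + n : ℕ) : ℝ) + 2))) with hf
  have hf0 : ∀ n, 0 ≤ f n := by
    intro n
    have : (0:ℝ) ≤ ((p + 1 + n : ℕ) : ℝ) := by positivity
    positivity
  have hfle : ∀ n : ℕ, f n ≤ C * (g (p + n) - g (p + n + 1)) := by
    intro n
    have e1 : p + 1 + n = (p + n) + 1 := by omega
    have hk : 1 ≤ p + n := by omega
    have := term_le (p + n) hk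
    have e2 : ((p + n + 1 : ℕ) : ℝ) = ((p + n : ℕ) : ℝ) + 1 := by push_cast; ring
    rw [← e2] at this
    simp only [hf, hC, hg, e1]
    exact this
  -- partial sums bounded
  have hsum : ∀ N : ℕ, ∑ n ∈ Finset.range N, f n ≤ C * g p := by
    intro N
    have h1 : ∑ n ∈ Finset.range N, f n
        ≤ ∑ n ∈ Finset.range N, C * (g (p + n) - g (p + n + 1)) :=
      Finset.sum_le_sum fun n _ => hfle n
    have h2 : ∑ n ∈ Finset.range N, C * (g (p + n) - g (p + n + 1))
        = C * (g p - g (p + N)) := by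
      rw [← Finset.mul_sum]
      congr 1
      have := Finset.sum_range_sub' (f := fun i => g (p + i)) N
      simpa [add_assoc] using this
    have hgN : 0 ≤ g (p + N) := by
      have : (0:ℝ) ≤ ((p + N : ℕ) : ℝ) := by positivity
      positivity
    calc ∑ n ∈ Finset.range N, f n ≤ C * (g p - g (p + N)) := h1.trans_eq h2
      _ ≤ C * g p := by nlinarith
  have htsum : ∑' n, f n ≤ C * g p := Real.tsum_le_of_sum_range_le hf0 hsum
  -- rewrite the rpow
  have hsp : (0:ℝ) < Real.sqrt p := Real.sqrt_pos.mpr hp0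
  have hrpow : (p : ℝ) ^ ((3 : ℝ) / 2) = (p:ℝ) * Real.sqrt p := by
    rw [show (3:ℝ)/2 = 1 + 1/2 by norm_num, Real.rpow_add hp0, Real.rpow_one,
      ← Real.sqrt_eq_rpow]
  -- constant comparison
  have hpi := Real.pi_pos
  have h2 : Real.sqrt 2 ≤ 1.415 := by
    have := Real.sqrt_le_sqrt (show (2:ℝ) ≤ 1.415^2 by norm_num)
    rwa [Real.sqrt_sq (by norm_num)] at this
  have h3 : (1.73:ℝ) ≤ Real.sqrt 3 := by
    have := Real.sqrt_le_sqrt (show (1.73:ℝ)^2 ≤ 3 by norm_num)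
    rwa [Real.sqrt_sq (by norm_num)] at this
  have hpil : Real.pi < 3.15 := Real.pi_lt_d2
  have he : (2.7182818283:ℝ) < Real.exp 1 := Real.exp_one_gt_d9
  have hs20 : (0:ℝ) < Real.sqrt 2 := Real.sqrt_pos.mpr (by norm_num)
  have hkey : Real.sqrt 2 * Real.pi ≤ Real.sqrt 3 * Real.exp 1 := by nlinarith
  have hA : (1/Real.pi) * C ≤ (Real.exp 1 / (Real.sqrt 2 * Real.pi ^ 2)) * (1/6) := by
    rw [hC]
    rw [div_mul_div_comm, div_mul_div_comm]
    rw [div_le_div_iff₀ (by positivity) (by positivity)]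
    have hexp0 : (0:ℝ) < Real.exp 1 := Real.exp_pos 1
    nlinarith [mul_le_mul_of_nonneg_left hkey (le_of_lt (mul_pos (by norm_num : (0:ℝ) < 6) hpi))]
  calc (1 / Real.pi) * ∑' n, f n
      ≤ (1 / Real.pi) * (C * g p) := by
        apply mul_le_mul_of_nonneg_left htsum (by positivity)
    _ = ((1/Real.pi) * C) * g p := by ring
    _ ≤ ((Real.exp 1 / (Real.sqrt 2 * Real.pi ^ 2)) * (1/6)) * g p := by
        apply mul_le_mul_of_nonneg_right hA
        have : (0:ℝ) ≤ (p:ℝ) := le_of_lt hp0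
        positivity
    _ = (Real.exp 1 / (Real.sqrt 2 * Real.pi ^ 2)) * (1 / (6 * (p : ℝ) ^ ((3 : ℝ) / 2))) := by
        rw [hrpow, hg]
        field_simp
end

section
/- For every integer p ≥ 3, the polynomial P(α) := 1/π + α/2 + (1/π)·Σ_{n=0}^{p} ((2n)!/(2^{2n}(n!)²(2n+1)(2n+2)))·α^{2n+2} satisfies: for all α, α' in [-1,1] with |α-α'| ≤ 1/(6p), |P(α) - P(α')| ≤ |α - α'|. -/
open Real Finset

noncomputable def bb (n : ℕ) : ℝ := (Nat.centralBinom n : ℝ) / 4 ^ n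

lemma bb_nonneg (n : ℕ) : 0 ≤ bb n :=
  div_nonneg (Nat.cast_nonneg _) (by positivity)

lemma bb_zero : bb 0 = 1 := by simp [bb, Nat.centralBinom]

lemma bb_succ (n : ℕ) : 2 * ((n : ℝ) + 1) * bb (n + 1) = (2 * n + 1) * bb n := by
  have h := Nat.succ_mul_centralBinom_succ n
  have h' : ((n : ℝ) + 1) * (Nat.centralBinom (n + 1) : ℝ)
      = 2 * (2 * n + 1) * (Nat.centralBinom n : ℝ) := by exact_mod_cast congrArg (Nat.cast : ℕ → ℝ) h
  have h4 : (4 : ℝ) ^ (n + 1) = 4 * 4 ^ n := by ring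
  unfold bb
  rw [h4, mul_div_assoc', mul_div_assoc', div_eq_div_iff (by positivity) (by positivity)]
  linear_combination (4:ℝ)^n * 2 * h'

lemma sumw (m : ℕ) :
    ∑ i ∈ range (m + 1), (2 * (i : ℝ) + 1) * (bb i * bb (m - i))
      = ((m : ℝ) + 1) * ∑ i ∈ range (m + 1), bb i * bb (m - i) := by
  have hrefl : ∑ i ∈ range (m + 1), (2 * (i : ℝ) + 1) * (bb i * bb (m - i))
      = ∑ i ∈ range (m + 1), (2 * ((m - i : ℕ) : ℝ) + 1) * (bb (m - i) * bb i) := by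
    rw [← Finset.sum_range_reflect]
    refine Finset.sum_congr rfl fun j hj => ?_
    have hj' : j ≤ m := Nat.lt_succ_iff.mp (Finset.mem_range.mp hj)
    have e1 : m + 1 - 1 - j = m - j := by omega
    have e2 : m - (m - j) = j := by omega
    rw [e1, e2]
  have hsum : (∑ i ∈ range (m + 1), (2 * (i : ℝ) + 1) * (bb i * bb (m - i)))
      + ∑ i ∈ range (m + 1), (2 * ((m - i : ℕ) : ℝ) + 1) * (bb (m - i) * bb i)
      = ∑ i ∈ range (m + 1), (2 * (m : ℝ) + 2) * (bb i * bb (m - i)) := by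
    rw [← Finset.sum_add_distrib]
    refine Finset.sum_congr rfl fun i hi => ?_
    have hi' : i ≤ m := Nat.lt_succ_iff.mp (Finset.mem_range.mp hi)
    rw [Nat.cast_sub hi']; ring
  rw [hrefl] at hsum
  rw [← Finset.mul_sum] at hsum
  linarith [hsum]

lemma conv_one (m : ℕ) : ∑ i ∈ range (m + 1), bb i * bb (m - i) = 1 := by
  induction m with
  | zero => simp [bb_zero]
  | succ m ih =>
    have key1 : ∑ i ∈ range (m + 1), (2 * (i : ℝ) + 1) * (bb i * bb (m - i))
        = (m : ℝ) + 1 := by rw [sumw, ih, mul_one]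
    have key2 : ∑ i ∈ range (m + 1), (2 * (i : ℝ) + 1) * (bb i * bb (m - i))
        = ∑ i ∈ range (m + 1), (2 * ((i : ℝ) + 1) * bb (i + 1)) * bb (m - i) := by
      refine Finset.sum_congr rfl fun i _ => ?_
      rw [bb_succ]; ring
    have key3 : ∑ j ∈ range (m + 2), (2 * (j : ℝ)) * (bb j * bb (m + 1 - j))
        = ∑ i ∈ range (m + 1), (2 * ((i : ℝ) + 1) * bb (i + 1)) * bb (m - i) := by
      rw [Finset.sum_range_succ']
      simp only [Nat.cast_zero, mul_zero, zero_mul, add_zero, Nat.succ_sub_succ]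
      refine Finset.sum_congr rfl fun i _ => ?_
      push_cast; ring
    have key4 : ∑ j ∈ range (m + 2), (2 * (j : ℝ)) * (bb j * bb (m + 1 - j))
        = ((m : ℝ) + 1) * ∑ j ∈ range (m + 2), bb j * bb (m + 1 - j) := by
      have h1 : ∑ j ∈ range (m + 2), (2 * (j : ℝ) + 1) * (bb j * bb (m + 1 - j))
          = ((m : ℝ) + 1 + 1) * ∑ j ∈ range (m + 2), bb j * bb (m + 1 - j) := by
        have := sumw (m + 1); push_cast at this ⊢; convert this using 2 <;> push_cast <;> ring
      have h2 : ∑ j ∈ range (m + 2), (2 * (j : ℝ) + 1) * (bb j * bb (m + 1 - j))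
          = (∑ j ∈ range (m + 2), (2 * (j : ℝ)) * (bb j * bb (m + 1 - j)))
            + ∑ j ∈ range (m + 2), bb j * bb (m + 1 - j) := by
        rw [← Finset.sum_add_distrib]
        exact Finset.sum_congr rfl fun j _ => by ring
      rw [h2] at h1; linarith
    have hfin : ((m : ℝ) + 1) * ∑ j ∈ range (m + 2), bb j * bb (m + 1 - j)
        = ((m : ℝ) + 1) * 1 := by
      rw [← key4, key3, ← key2, key1, mul_one]
    have hm : ((m : ℝ) + 1) ≠ 0 := by positivity
    have := mul_left_cancel₀ hm hfin
    simpa using this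

lemma partial_binom_le (N : ℕ) {t : ℝ} (h0 : 0 ≤ t) (h1 : t < 1) :
    ∑ n ∈ range N, bb n * t ^ n ≤ 1 / Real.sqrt (1 - t) := by
  set S := ∑ n ∈ range N, bb n * t ^ n with hS
  have hSnn : 0 ≤ S :=
    Finset.sum_nonneg fun n _ => mul_nonneg (bb_nonneg n) (pow_nonneg h0 n)
  have h1t : (0 : ℝ) < 1 - t := by linarith
  set M := 2 * N + 1 with hM
  set T : Finset (ℕ × ℕ) :=
    (range M ×ˢ range M).filter (fun q => q.1 + q.2 < M) with hT
  have hsq : S ^ 2 ≤ ∑ m ∈ range M, t ^ m := by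
    have e1 : S ^ 2 = ∑ q ∈ range N ×ˢ range N, bb q.1 * bb q.2 * t ^ (q.1 + q.2) := by
      rw [sq, hS, Finset.sum_mul_sum]
      rw [Finset.sum_product]
      exact Finset.sum_congr rfl fun i _ => Finset.sum_congr rfl fun j _ => by
        rw [pow_add]; ring
    have e2 : ∑ q ∈ range N ×ˢ range N, bb q.1 * bb q.2 * t ^ (q.1 + q.2)
        ≤ ∑ q ∈ T, bb q.1 * bb q.2 * t ^ (q.1 + q.2) := by
      refine Finset.sum_le_sum_of_subset_of_nonneg ?_ fun q _ _ =>
        mul_nonneg (mul_nonneg (bb_nonneg _) (bb_nonneg _)) (pow_nonneg h0 _)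
      intro q hq
      rw [Finset.mem_product] at hq
      simp only [Finset.mem_range] at hq
      simp only [hT, Finset.mem_filter, Finset.mem_product, Finset.mem_range]
      omega
    have e3 : ∑ q ∈ T, bb q.1 * bb q.2 * t ^ (q.1 + q.2) = ∑ m ∈ range M, t ^ m := by
      rw [← Finset.sum_fiberwise_of_maps_to (g := fun q : ℕ × ℕ => q.1 + q.2)
        (t := range M) (fun q hq => by
          simp only [hT, Finset.mem_filter, Finset.mem_product, Finset.mem_range] at hq
          exact Finset.mem_range.mpr hq.2)]
      refine Finset.sum_congr rfl fun m hm => ?_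
      have hmM : m < M := Finset.mem_range.mp hm
      have hfil : T.filter (fun q : ℕ × ℕ => q.1 + q.2 = m) = Finset.HasAntidiagonal.antidiagonal m := by
        ext q
        simp only [hT, Finset.mem_filter, Finset.mem_product, Finset.mem_range,
          Finset.HasAntidiagonal.mem_antidiagonal]
        omega
      rw [hfil, Finset.Nat.sum_antidiagonal_eq_sum_range_succ_mk]
      have : ∑ k ∈ range (m + 1), bb k * bb (m - k) * t ^ (k + (m - k))
          = ∑ k ∈ range (m + 1), bb k * bb (m - k) * t ^ m := by
        refine Finset.sum_congr rfl fun k hk => ?_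
        have : k + (m - k) = m := by
          have := Nat.lt_succ_iff.mp (Finset.mem_range.mp hk); omega
        rw [this]
      rw [this, ← Finset.sum_mul, conv_one, one_mul]
    calc S ^ 2 = _ := e1
      _ ≤ _ := e2
      _ = _ := e3
  have hgeom : ∑ m ∈ range M, t ^ m ≤ 1 / (1 - t) := by
    have := geom_sum_mul t M
    have ht : 0 ≤ t ^ M := pow_nonneg h0 M
    rw [le_div_iff₀ h1t]
    nlinarith [this]
  have hsq' : S ^ 2 ≤ 1 / (1 - t) := hsq.trans hgeom
  have : S ≤ Real.sqrt (1 / (1 - t)) := by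
    rw [show S = Real.sqrt (S ^ 2) from (Real.sqrt_sq hSnn).symm]
    exact Real.sqrt_le_sqrt hsq'
  calc S ≤ Real.sqrt (1 / (1 - t)) := this
    _ = 1 / Real.sqrt (1 - t) := by
        rw [one_div, Real.sqrt_inv, one_div]

lemma trunc_arcsin_le (p : ℕ) :
    ∑ n ∈ range (p + 1), bb n / (2 * (n : ℝ) + 1) ≤ π / 2 := by
  set f : ℝ → ℝ := fun x => ∑ n ∈ range (p + 1), bb n / (2 * (n : ℝ) + 1) * x ^ (2 * n + 1)
    with hf
  -- derivative of f
  have hfd : ∀ x : ℝ, HasDerivAt f (∑ n ∈ range (p + 1), bb n * x ^ (2 * n)) x := by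
    intro x
    have : HasDerivAt f
        (∑ n ∈ range (p + 1), bb n / (2 * (n : ℝ) + 1) * ((2 * n + 1) * x ^ (2 * n))) x := by
      apply HasDerivAt.fun_sum
      intro n _
      have h := (hasDerivAt_pow (2 * n + 1) x).const_mul (bb n / (2 * (n : ℝ) + 1))
      simpa using h
    convert this using 1
    refine Finset.sum_congr rfl fun n _ => ?_
    have hne : (2 * (n : ℝ) + 1) ≠ 0 := by positivity
    field_simp
  -- f c ≤ arcsin c for c ∈ [0,1)
  have key : ∀ c : ℝ, 0 ≤ c → c < 1 → f c ≤ Real.arcsin c := by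
    intro c hc0 hc1
    set g : ℝ → ℝ := fun x => Real.arcsin x - f x with hg
    have hgd : ∀ x ∈ Set.Ioo (0 : ℝ) c, HasDerivAt g
        (1 / Real.sqrt (1 - x ^ 2) - ∑ n ∈ range (p + 1), bb n * x ^ (2 * n)) x := by
      intro x hx
      have hx1 : x ≠ 1 := by intro h; rw [h] at hx; exact absurd hx.2 (by linarith)
      have hxm1 : x ≠ -1 := by intro h; rw [h] at hx; linarith [hx.1]
      exact (Real.hasDerivAt_arcsin hxm1 hx1).sub (hfd x)
    have hmono : MonotoneOn g (Set.Icc 0 c) := by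
      apply monotoneOn_of_deriv_nonneg (convex_Icc 0 c)
      · exact (Real.continuous_arcsin.sub (by
          apply continuous_finset_sum
          intro n _
          exact continuous_const.mul (continuous_pow _))).continuousOn
      · intro x hx
        rw [interior_Icc] at hx
        exact ((hgd x hx).differentiableAt).differentiableWithinAt
      · intro x hx
        rw [interior_Icc] at hx
        rw [(hgd x hx).deriv]
        have hx0 : 0 < x := hx.1
        have hxc : x < c := hx.2
        have hx1 : x < 1 := lt_of_lt_of_le hxc (le_of_lt hc1)
        have ht0 : (0:ℝ) ≤ x ^ 2 := sq_nonneg x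
        have ht1 : x ^ 2 < 1 := by nlinarith
        have hb := partial_binom_le (p + 1) ht0 ht1
        have : ∑ n ∈ range (p + 1), bb n * x ^ (2 * n)
            = ∑ n ∈ range (p + 1), bb n * (x ^ 2) ^ n := by
          exact Finset.sum_congr rfl fun n _ => by rw [← pow_mul]
        rw [this]
        linarith
    have h0c : (0:ℝ) ∈ Set.Icc (0:ℝ) c := ⟨le_refl _, hc0⟩
    have hcc : c ∈ Set.Icc (0:ℝ) c := ⟨hc0, le_refl _⟩
    have := hmono h0c hcc hc0
    have hg0 : g 0 = 0 := by
      simp [hg, hf, Real.arcsin_zero]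
    rw [hg0] at this
    simp only [hg] at this
    linarith
  -- take the limit c → 1⁻
  have hcont : Filter.Tendsto f (nhdsWithin 1 (Set.Iio 1)) (nhds (f 1)) := by
    have : Continuous f := by
      apply continuous_finset_sum
      intro n _
      exact continuous_const.mul (continuous_pow _)
    exact (this.continuousAt).tendsto.mono_left nhdsWithin_le_nhds
  have hf1 : f 1 = ∑ n ∈ range (p + 1), bb n / (2 * (n : ℝ) + 1) := by
    simp [hf]
  have hev : ∀ᶠ c in nhdsWithin 1 (Set.Iio 1), f c ≤ π / 2 := by
    filter_upwards [Ioo_mem_nhdsLT_of_mem (Set.mem_Ioc.mpr ⟨zero_lt_one, le_refl (1:ℝ)⟩)]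
      with c hc
    exact (key c (le_of_lt hc.1) hc.2).trans (Real.arcsin_le_pi_div_two c)
  have := le_of_tendsto hcont hev
  rwa [hf1] at this

lemma coeff_eq (n : ℕ) :
    ((Nat.factorial (2 * n) : ℝ) /
        (2 ^ (2 * n) * (Nat.factorial n : ℝ) ^ 2 * (2 * (n : ℝ) + 1) * (2 * (n : ℝ) + 2)))
      * (2 * (n : ℝ) + 2) = bb n / (2 * (n : ℝ) + 1) := by
  have hc : (Nat.centralBinom n : ℝ) * ((Nat.factorial n : ℝ) * (Nat.factorial n : ℝ))
      = (Nat.factorial (2 * n) : ℝ) := by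
    have h0 := Nat.choose_mul_factorial_mul_factorial (show n ≤ 2 * n by omega)
    have h2 : 2 * n - n = n := by omega
    rw [h2] at h0
    have h3 : Nat.centralBinom n * (Nat.factorial n * Nat.factorial n)
        = Nat.factorial (2 * n) := by
      rw [Nat.centralBinom]; rw [← h0]; ring
    exact_mod_cast congrArg (Nat.cast : ℕ → ℝ) h3
  have h24 : (2 : ℝ) ^ (2 * n) = 4 ^ n := by
    rw [pow_mul]; norm_num
  rw [bb, h24, ← hc]
  have h1 : (2 * (n : ℝ) + 1) ≠ 0 := by positivity
  have h2 : (2 * (n : ℝ) + 2) ≠ 0 := by positivity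
  have h3 : (4 : ℝ) ^ n ≠ 0 := by positivity
  have h4 : (Nat.factorial n : ℝ) ≠ 0 := Nat.cast_ne_zero.mpr (Nat.factorial_ne_zero n)
  field_simp

lemma abs_pow_sub_pow_le' {x y : ℝ} (hx : |x| ≤ 1) (hy : |y| ≤ 1) (m : ℕ) :
    |x ^ m - y ^ m| ≤ m * |x - y| := by
  induction m with
  | zero => simp
  | succ m ih =>
    have hxy : x ^ (m + 1) - y ^ (m + 1) = x ^ m * (x - y) + (x ^ m - y ^ m) * y := by ring
    have hxm : |x ^ m| ≤ 1 := by rw [abs_pow]; exact pow_le_one₀ (abs_nonneg x) hx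
    calc |x ^ (m + 1) - y ^ (m + 1)|
        ≤ |x ^ m * (x - y)| + |(x ^ m - y ^ m) * y| := by rw [hxy]; exact abs_add_le _ _
      _ = |x ^ m| * |x - y| + |x ^ m - y ^ m| * |y| := by rw [abs_mul, abs_mul]
      _ ≤ 1 * |x - y| + (m * |x - y|) * 1 := by gcongr
      _ = (m + 1 : ℕ) * |x - y| := by push_cast; ring

/-- Degree-(2p+2) truncated Taylor polynomial of the first-order arc-cosine kernel κ₁. -/
noncomputable def Ptrunc (p : ℕ) (α : ℝ) : ℝ :=
  1 / Real.pi + α / 2 + (1 / Real.pi) * ∑ n ∈ Finset.range (p + 1),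
    ((Nat.factorial (2 * n) : ℝ) /
        (2 ^ (2 * n) * (Nat.factorial n : ℝ) ^ 2 * (2 * (n : ℝ) + 1) * (2 * (n : ℝ) + 2))) *
      α ^ (2 * n + 2)

/-- the truncated polynomial of κ₁ is 1-Lipschitz on points of [-1,1]
that are at distance at most 1/(6p). -/
theorem Ptrunc_lipschitz (p : ℕ) (hp : 3 ≤ p) :
    ∀ α ∈ Set.Icc (-1 : ℝ) 1, ∀ α' ∈ Set.Icc (-1 : ℝ) 1,
      |α - α'| ≤ 1 / (6 * (p : ℝ)) → |Ptrunc p α - Ptrunc p α'| ≤ |α - α'| := by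
  intro α hα α' hα' _hdist
  have hαa : |α| ≤ 1 := abs_le.mpr ⟨hα.1, hα.2⟩
  have hα'a : |α'| ≤ 1 := abs_le.mpr ⟨hα'.1, hα'.2⟩
  set cc : ℕ → ℝ := fun n =>
    (Nat.factorial (2 * n) : ℝ) /
      (2 ^ (2 * n) * (Nat.factorial n : ℝ) ^ 2 * (2 * (n : ℝ) + 1) * (2 * (n : ℝ) + 2))
    with hcc
  have hccnn : ∀ n, 0 ≤ cc n := by
    intro n
    apply div_nonneg (Nat.cast_nonneg _)
    positivity
  have hsplit : Ptrunc p α - Ptrunc p α'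
      = (α - α') / 2 + (1 / π) * ∑ n ∈ range (p + 1),
          cc n * (α ^ (2 * n + 2) - α' ^ (2 * n + 2)) := by
    have hd : ∑ n ∈ range (p + 1), cc n * (α ^ (2 * n + 2) - α' ^ (2 * n + 2))
        = (∑ n ∈ range (p + 1), cc n * α ^ (2 * n + 2))
          - ∑ n ∈ range (p + 1), cc n * α' ^ (2 * n + 2) := by
      rw [← Finset.sum_sub_distrib]
      exact Finset.sum_congr rfl fun n _ => by ring
    unfold Ptrunc
    rw [hd]
    ring
  have hterm : ∀ n ∈ range (p + 1),
      |cc n * (α ^ (2 * n + 2) - α' ^ (2 * n + 2))|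
        ≤ bb n / (2 * (n : ℝ) + 1) * |α - α'| := by
    intro n _
    rw [abs_mul, abs_of_nonneg (hccnn n)]
    have h1 : |α ^ (2 * n + 2) - α' ^ (2 * n + 2)| ≤ (2 * (n : ℝ) + 2) * |α - α'| := by
      have := abs_pow_sub_pow_le' hαa hα'a (2 * n + 2)
      push_cast at this
      convert this using 2 <;> push_cast <;> ring
    calc cc n * |α ^ (2 * n + 2) - α' ^ (2 * n + 2)|
        ≤ cc n * ((2 * (n : ℝ) + 2) * |α - α'|) := by
          exact mul_le_mul_of_nonneg_left h1 (hccnn n)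
      _ = (cc n * (2 * (n : ℝ) + 2)) * |α - α'| := by ring
      _ = bb n / (2 * (n : ℝ) + 1) * |α - α'| := by rw [hcc]; rw [coeff_eq]
  have hsum : |∑ n ∈ range (p + 1), cc n * (α ^ (2 * n + 2) - α' ^ (2 * n + 2))|
      ≤ (π / 2) * |α - α'| := by
    calc |∑ n ∈ range (p + 1), cc n * (α ^ (2 * n + 2) - α' ^ (2 * n + 2))|
        ≤ ∑ n ∈ range (p + 1), |cc n * (α ^ (2 * n + 2) - α' ^ (2 * n + 2))| :=
          Finset.abs_sum_le_sum_abs _ _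
      _ ≤ ∑ n ∈ range (p + 1), bb n / (2 * (n : ℝ) + 1) * |α - α'| :=
          Finset.sum_le_sum hterm
      _ = (∑ n ∈ range (p + 1), bb n / (2 * (n : ℝ) + 1)) * |α - α'| := by
          rw [Finset.sum_mul]
      _ ≤ (π / 2) * |α - α'| := by
          apply mul_le_mul_of_nonneg_right (trunc_arcsin_le p) (abs_nonneg _)
  have hpi : (0:ℝ) < π := Real.pi_pos
  calc |Ptrunc p α - Ptrunc p α'|
      = |(α - α') / 2 + (1 / π) * ∑ n ∈ range (p + 1),
          cc n * (α ^ (2 * n + 2) - α' ^ (2 * n + 2))| := by rw [hsplit]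
    _ ≤ |(α - α') / 2| + |(1 / π) * ∑ n ∈ range (p + 1),
          cc n * (α ^ (2 * n + 2) - α' ^ (2 * n + 2))| := abs_add_le _ _
    _ = |α - α'| / 2 + (1 / π) * |∑ n ∈ range (p + 1),
          cc n * (α ^ (2 * n + 2) - α' ^ (2 * n + 2))| := by
        rw [abs_div, abs_mul, abs_of_nonneg (by positivity : (0:ℝ) ≤ 1 / π)]
        norm_num
    _ ≤ |α - α'| / 2 + (1 / π) * ((π / 2) * |α - α'|) := by
        have : (0:ℝ) ≤ 1 / π := by positivity
        linarith [mul_le_mul_of_nonneg_left hsum this]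
    _ = |α - α'| := by field_simp; ring
end
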